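/- arXiv:2405.17764 — 2 statements merged into one kernel-verified Lean document; each statement's English description precedes it below -/
import Mathlib

section
/- Let n ≥ 1 be an integer and A ∈ ℝ^{d×d} a positive definite matrix. For every positive definite Σ ∈ ℝ^{d×d}, one has n·log det Σ + tr(Σ⁻¹ A) ≥ n·log det(n⁻¹A) + n·d, with equality if and only if Σ = n⁻¹ A. -/
/-!
Put `R = A^{1/2}` and `S = R Σ⁻¹ R`, a positive definite matrix with eigenvalues `μᵢ`. Then
`tr (Σ⁻¹ A) = tr S` and `log det Σ = log det A - log det S`, so the difference of the two sides is
`∑ᵢ (μᵢ - n log μᵢ) - d (n - n log n)`. Each term is nonnegative because `x ↦ x - n log x` has its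
unique minimum at `x = n`; equality forces every `μᵢ = n`, i.e. `S = n • 1`, i.e. `Σ = n⁻¹ A`.
-/

open Matrix

namespace Real

lemma sub_mul_log_lt_sub_mul_log {c x : ℝ} (hc : 0 < c) (hx : 0 < x) (hxc : x ≠ c) :
    c - c * log c < x - c * log x := by
  have h := mul_lt_mul_of_pos_left
    (log_lt_sub_one_of_pos (div_pos hx hc) (by rwa [ne_eq, div_eq_one_iff_eq hc.ne'])) hc
  rw [log_div hx.ne' hc.ne', mul_sub, mul_sub, mul_div_cancel₀ _ hc.ne', mul_one] at h
  linarith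

lemma sub_mul_log_le_sub_mul_log {c x : ℝ} (hc : 0 < c) (hx : 0 < x) :
    c - c * log c ≤ x - c * log x := by
  rcases eq_or_ne x c with rfl | hxc
  · rfl
  · exact (sub_mul_log_lt_sub_mul_log hc hx hxc).le

end Real

namespace Matrix

variable {ι : Type*} [Fintype ι] [DecidableEq ι]

lemma IsHermitian.eq_smul_one_of_eigenvalues_eq {S : Matrix ι ι ℝ} (hS : S.IsHermitian) {c : ℝ}
    (h : ∀ i, hS.eigenvalues i = c) : S = c • 1 := by
  rw [← Algebra.algebraMap_eq_smul_one]
  refine CFC.eq_algebraMap_of_spectrum_subset_singleton S c ?_ hS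
  rw [hS.spectrum_real_eq_range_eigenvalues]
  rintro _ ⟨i, rfl⟩
  exact h i

lemma PosDef.trace_sub_mul_log_det {S : Matrix ι ι ℝ} (hS : S.PosDef) (c : ℝ) :
    S.trace - c * Real.log S.det =
      ∑ i, (hS.1.eigenvalues i - c * Real.log (hS.1.eigenvalues i)) := by
  have htrace := hS.1.trace_eq_sum_eigenvalues
  have hdet := hS.1.det_eq_prod_eigenvalues
  simp only [RCLike.ofReal_real_eq_id, id] at htrace hdet
  rw [htrace, hdet, Real.log_prod fun i _ => (hS.eigenvalues_pos i).ne', Finset.mul_sum,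
    Finset.sum_sub_distrib]

lemma PosDef.card_mul_le_trace_sub_mul_log_det {S : Matrix ι ι ℝ} (hS : S.PosDef) {c : ℝ}
    (hc : 0 < c) :
    Fintype.card ι * (c - c * Real.log c) ≤ S.trace - c * Real.log S.det := by
  rw [hS.trace_sub_mul_log_det, ← nsmul_eq_mul, ← Finset.card_univ, ← Finset.sum_const]
  exact Finset.sum_le_sum fun i _ => Real.sub_mul_log_le_sub_mul_log hc (hS.eigenvalues_pos i)

lemma PosDef.trace_sub_mul_log_det_eq_iff {S : Matrix ι ι ℝ} (hS : S.PosDef) {c : ℝ}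
    (hc : 0 < c) :
    S.trace - c * Real.log S.det = Fintype.card ι * (c - c * Real.log c) ↔ S = c • 1 := by
  refine ⟨fun h => hS.1.eq_smul_one_of_eigenvalues_eq fun i => ?_, ?_⟩
  · rw [hS.trace_sub_mul_log_det, ← nsmul_eq_mul, ← Finset.card_univ, ← Finset.sum_const,
      eq_comm, Finset.sum_eq_sum_iff_of_le fun i _ =>
        Real.sub_mul_log_le_sub_mul_log hc (hS.eigenvalues_pos i)] at h
    by_contra hne
    exact (Real.sub_mul_log_lt_sub_mul_log hc (hS.eigenvalues_pos i) hne).ne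
      (h i (Finset.mem_univ i))
  · rintro rfl
    rw [trace_smul, trace_one, det_smul, det_one, mul_one, Real.log_pow, smul_eq_mul]
    ring

lemma mul_inv_mul_eq_smul_one_iff {K : Type*} [CommRing K] {R S : Matrix ι ι K} (hR : IsUnit R)
    (hS : IsUnit S) (c : K) :
    R * S⁻¹ * R = c • 1 ↔ R * R = c • S := by
  have hR' := (isUnit_iff_isUnit_det R).1 hR
  have hS' := (isUnit_iff_isUnit_det S).1 hS
  constructor
  · intro h
    calc R * R = S * R⁻¹ * (R * S⁻¹ * R) * R := by
          simp only [mul_assoc, nonsing_inv_mul_cancel_left _ _ hR',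
            mul_nonsing_inv_cancel_left _ _ hS']
      _ = c • S := by rw [h]; simp [mul_assoc, nonsing_inv_mul _ hR']
  · intro h
    calc R * S⁻¹ * R = R⁻¹ * (R * R) * S⁻¹ * R := by
          rw [← mul_assoc, nonsing_inv_mul _ hR', one_mul]
      _ = c • 1 := by
          rw [h]; simp [mul_assoc, mul_nonsing_inv_cancel_left _ _ hS', nonsing_inv_mul _ hR']

open MatrixOrder in
theorem PosDef.le_mul_log_det_add_trace_inv_mul {A Sig : Matrix ι ι ℝ} (hA : A.PosDef)
    (hSig : Sig.PosDef) {c : ℝ} (hc : 0 < c) :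
    c * Real.log (c⁻¹ • A).det + c * Fintype.card ι ≤ c * Real.log Sig.det + (Sig⁻¹ * A).trace ∧
      (c * Real.log Sig.det + (Sig⁻¹ * A).trace = c * Real.log (c⁻¹ • A).det + c * Fintype.card ι ↔
        Sig = c⁻¹ • A) := by
  set R := CFC.sqrt A
  have hRR : R * R = A := CFC.sqrt_mul_sqrt_self A hA.posSemidef.nonneg
  have hR : R.IsHermitian := (CFC.sqrt_nonneg A).posSemidef.1
  have hRunit : IsUnit R := isUnit_of_mul_isUnit_left (hRR ▸ hA.isUnit)
  set S := R * Sig⁻¹ * R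
  have hS : S.PosDef := by
    have := hSig.inv.conjTranspose_mul_mul_same (mulVec_injective_iff_isUnit.2 hRunit)
    rwa [hR.eq] at this
  have htrace : (Sig⁻¹ * A).trace = S.trace := by rw [← hRR, ← mul_assoc, trace_mul_cycle]
  have hlogSig : Real.log Sig.det = Real.log A.det - Real.log S.det := by
    have hdetS : S.det = A.det / Sig.det := by
      rw [det_mul, det_mul, det_nonsing_inv, Ring.inverse_eq_inv', ← hRR, det_mul]
      ring
    rw [hdetS, Real.log_div hA.det_pos.ne' hSig.det_pos.ne']
    ring
  have hlogA : Real.log (c⁻¹ • A).det = Real.log A.det - Fintype.card ι * Real.log c := by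
    rw [det_smul, Real.log_mul (by positivity) hA.det_pos.ne', Real.log_pow, Real.log_inv]
    ring
  have hiff : S = c • 1 ↔ Sig = c⁻¹ • A := by
    rw [mul_inv_mul_eq_smul_one_iff hRunit hSig.isUnit, hRR, eq_inv_smul_iff₀ hc.ne', eq_comm]
  have hle := hS.card_mul_le_trace_sub_mul_log_det hc
  rw [← hS.trace_sub_mul_log_det_eq_iff hc] at hiff
  rw [hlogSig, hlogA, htrace, ← hiff]
  constructor
  · linarith
  · constructor <;> intro h <;> linarith

end Matrix

/-- For `n ≥ 1` and positive definite `A ∈ ℝ^{d×d}`, every positive definite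
`Σ ∈ ℝ^{d×d}` satisfies `n·log det Σ + tr(Σ⁻¹ A) ≥ n·log det(n⁻¹A) + n·d`, with equality
if and only if `Σ = n⁻¹ A`. -/
theorem key_inequality {n d : ℕ} (hn : 1 ≤ n)
    (A : Matrix (Fin d) (Fin d) ℝ) (hA : A.PosDef) :
    ∀ Sig : Matrix (Fin d) (Fin d) ℝ, Sig.PosDef →
      (n : ℝ) * Real.log ((n : ℝ)⁻¹ • A).det + (n : ℝ) * (d : ℝ) ≤
        (n : ℝ) * Real.log Sig.det + Matrix.trace (Sig⁻¹ * A) ∧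
      ((n : ℝ) * Real.log Sig.det + Matrix.trace (Sig⁻¹ * A) =
          (n : ℝ) * Real.log ((n : ℝ)⁻¹ • A).det + (n : ℝ) * (d : ℝ) ↔
        Sig = (n : ℝ)⁻¹ • A) := by
  intro Sig hSig
  have h := hA.le_mul_log_det_add_trace_inv_mul hSig (c := n) (by exact_mod_cast hn)
  rwa [Fintype.card_fin] at h
end

section
/- Let T ≥ 2 and d ≥ 1, let Σ_T ∈ ℝ^{(T−1)×(T−1)} be the matrix with entries [Σ_T]_{s,t} = min(s,t)·(T − max(s,t))/T, assumed positive definite, and let Σ ∈ ℝ^{d×d} be positive definite. If the random matrix X ∈ ℝ^{d×(T−1)} satisfies vec(X) ~ N(0, Σ_T ⊗ Σ), then the real random variable tr(Σ⁻¹ X Σ_T⁻¹ Xᵀ) follows the chi-square distribution with (T−1)·d degrees of freedom, i.e., the Gamma distribution with shape (T−1)·d/2 and rate 1/2. -/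
open MeasureTheory ProbabilityTheory Matrix
open scoped Kronecker

/-- The density of the centered multivariate Gaussian measure `N(0, C)` on `ι → ℝ`. -/
noncomputable def gaussianPdf {ι : Type*} [Fintype ι] [DecidableEq ι]
    (C : Matrix ι ι ℝ) (x : ι → ℝ) : ℝ :=
  (Real.sqrt ((2 * Real.pi) ^ (Fintype.card ι) * C.det))⁻¹ *
    Real.exp (-(x ⬝ᵥ C⁻¹.mulVec x) / 2)

/-- The centered multivariate Gaussian measure `N(0, C)` on `ι → ℝ`, given by its density
with respect to Lebesgue measure. -/
noncomputable def multivariateGaussian {ι : Type*} [Fintype ι] [DecidableEq ι]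
    (C : Matrix ι ι ℝ) : Measure (ι → ℝ) :=
  volume.withDensity fun x => ENNReal.ofReal (gaussianPdf C x)

/-- The covariance matrix `Σ_T` of the standard Brownian bridge on `[0,T]` sampled at times
`1, …, T-1`: its `(s,t)` entry is `min(s,t)·(T − max(s,t))/T` (indices shifted by one). -/
noncomputable def bridgeCov (T : ℕ) : Matrix (Fin (T - 1)) (Fin (T - 1)) ℝ :=
  Matrix.of fun s t =>
    ((min (s.1 + 1) (t.1 + 1) : ℕ) : ℝ) * ((T : ℝ) - ((max (s.1 + 1) (t.1 + 1) : ℕ) : ℝ)) / T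

/-- Column-stacking vectorization of a `d × m` matrix, indexed by (column, row) pairs. -/
def vec {d m : ℕ} (X : Matrix (Fin d) (Fin m) ℝ) : Fin m × Fin d → ℝ :=
  fun p => X p.2 p.1


/-!
Factor `Σ_T ⊗ Σ = A Aᵀ` with `A` invertible. Then `vec X` has the law of `A Z` for a standard
Gaussian vector `Z`, and `tr(Σ⁻¹ X Σ_T⁻¹ Xᵀ) = vec(X)ᵀ (Σ_T ⊗ Σ)⁻¹ vec(X)` becomes `|Z|²`.
The squared norm of a standard Gaussian vector in `ℝⁿ` is `χ²ₙ`: in polar coordinates its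
density is radial, and the substitution `s = r²` turns `rⁿ⁻¹ e^{-r²/2} dr` into the gamma
density of shape `n/2` and rate `1/2`.
-/

open Real Set

section LinearAlgebra

variable {m n R : Type*} [Fintype m] [Fintype n] [CommRing R]

theorem Matrix.trace_mul_mul_mul_transpose (A : Matrix m m R) (X : Matrix m n R)
    (B : Matrix n n R) :
    (A * X * B * Xᵀ).trace = vec X ⬝ᵥ (Bᵀ ⊗ₖ A) *ᵥ vec X := by
  rw [kronecker_mulVec_vec, transpose_transpose, vec_dotProduct_vec, trace_mul_comm]

theorem Matrix.dotProduct_mulVec_inv_mul_transpose [DecidableEq n] {A : Matrix n n ℝ}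
    (hA : IsUnit A.det) (x : n → ℝ) :
    A *ᵥ x ⬝ᵥ (A * Aᵀ)⁻¹ *ᵥ A *ᵥ x = x ⬝ᵥ x := by
  rw [mul_inv_rev, ← mulVec_mulVec, mulVec_mulVec x A⁻¹, nonsing_inv_mul _ hA, one_mulVec,
    dotProduct_mulVec, ← vecMul_transpose, vecMul_vecMul,
    mul_nonsing_inv _ (by rwa [det_transpose]), vecMul_one]

open scoped MatrixOrder in
theorem Matrix.PosDef.exists_eq_mul_transpose [DecidableEq n] {C : Matrix n n ℝ}
    (hC : C.PosDef) : ∃ A : Matrix n n ℝ, IsUnit A.det ∧ C = A * Aᵀ := by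
  obtain ⟨B, rfl⟩ := CStarAlgebra.nonneg_iff_eq_star_mul_self.mp hC.posSemidef.nonneg
  have hdet : IsUnit (star B * B).det := (isUnit_iff_isUnit_det _).mp hC.isUnit
  rw [det_mul] at hdet
  exact ⟨star B, isUnit_of_mul_isUnit_left hdet, by simp [star_eq_conjTranspose]⟩

end LinearAlgebra

section Gaussian

variable {ι : Type*} [Fintype ι] [DecidableEq ι]

theorem continuous_gaussianPdf (C : Matrix ι ι ℝ) : Continuous (gaussianPdf C) := by
  unfold gaussianPdf
  fun_prop

theorem gaussianPdf_nonneg (C : Matrix ι ι ℝ) (x : ι → ℝ) : 0 ≤ gaussianPdf C x := by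
  unfold gaussianPdf
  positivity

theorem gaussianPdf_one (x : ι → ℝ) :
    gaussianPdf (1 : Matrix ι ι ℝ) x = (√((2 * π) ^ Fintype.card ι))⁻¹ * exp (-(x ⬝ᵥ x) / 2) := by
  simp [gaussianPdf]

theorem integrable_gaussianPdf_one : Integrable (gaussianPdf (1 : Matrix ι ι ℝ)) := by
  have hprod : gaussianPdf (1 : Matrix ι ι ℝ) =
      fun x => (√((2 * π) ^ Fintype.card ι))⁻¹ * ∏ i, exp (-(1 / 2) * x i ^ 2) := by
    ext x
    rw [gaussianPdf_one, ← exp_sum, dotProduct, neg_div, Finset.sum_div, ← Finset.sum_neg_distrib]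
    simp only [sq]
    congr 2
    exact Finset.sum_congr rfl fun i _ => by ring
  rw [hprod]
  exact (Integrable.fintype_prod (f := fun _ y => exp (-(1 / 2) * y ^ 2))
    fun _ => integrable_exp_neg_mul_sq one_half_pos).const_mul _

theorem abs_det_mul_gaussianPdf_mul_transpose {A : Matrix ι ι ℝ} (hA : IsUnit A.det)
    (x : ι → ℝ) :
    |A.det| * gaussianPdf (A * Aᵀ) (A *ᵥ x) = gaussianPdf 1 x := by
  have hdet : |A.det| ≠ 0 := abs_ne_zero.mpr hA.ne_zero
  rw [gaussianPdf_one, gaussianPdf, Matrix.dotProduct_mulVec_inv_mul_transpose hA,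
    Matrix.det_mul, Matrix.det_transpose, sqrt_mul (by positivity), sqrt_mul_self_eq_abs]
  field_simp

theorem multivariateGaussian_mul_transpose {A : Matrix ι ι ℝ} (hA : IsUnit A.det) :
    _root_.multivariateGaussian (A * Aᵀ) = (_root_.multivariateGaussian 1).map (A *ᵥ ·) := by
  have hA_meas : Measurable (A *ᵥ · : (ι → ℝ) → ι → ℝ) := by fun_prop
  have hpdf : Measurable fun y => ENNReal.ofReal (gaussianPdf (A * Aᵀ) y) :=
    (continuous_gaussianPdf _).measurable.ennreal_ofReal
  have hvol : volume.map (A *ᵥ ·) = ENNReal.ofReal |A.det⁻¹| • (volume : Measure (ι → ℝ)) := by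
    rw [← funext (Matrix.toLin'_apply A)]
    exact Real.map_matrix_volume_pi_eq_smul_volume_pi hA.ne_zero
  ext s hs
  rw [Measure.map_apply hA_meas hs, _root_.multivariateGaussian, _root_.multivariateGaussian,
    withDensity_apply _ hs, withDensity_apply _ (hA_meas hs)]
  symm
  calc ∫⁻ x in (A *ᵥ ·) ⁻¹' s, ENNReal.ofReal (gaussianPdf 1 x)
      = ∫⁻ x in (A *ᵥ ·) ⁻¹' s,
          ENNReal.ofReal |A.det| * ENNReal.ofReal (gaussianPdf (A * Aᵀ) (A *ᵥ x)) := by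
        simp_rw [← abs_det_mul_gaussianPdf_mul_transpose hA, ENNReal.ofReal_mul (abs_nonneg _)]
    _ = ENNReal.ofReal |A.det| * ∫⁻ y in s, ENNReal.ofReal (gaussianPdf (A * Aᵀ) y)
          ∂volume.map (A *ᵥ ·) := by
        rw [← lintegral_const_mul _ hpdf, setLIntegral_map hs (hpdf.const_mul _) hA_meas]
    _ = ∫⁻ y in s, ENNReal.ofReal (gaussianPdf (A * Aᵀ) y) := by
        rw [hvol, Measure.restrict_smul, lintegral_smul_measure, smul_eq_mul, ← mul_assoc,
          ← ENNReal.ofReal_mul (abs_nonneg _), ← abs_mul, mul_inv_cancel₀ hA.ne_zero, abs_one,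
          ENNReal.ofReal_one, one_mul]

end Gaussian

section Polar

theorem integral_rpow_mul_comp_sq_Ioi (a : ℝ) (g : ℝ → ℝ) :
    ∫ r in Ioi 0, r ^ a * g (r ^ 2) = 2⁻¹ * ∫ s in Ioi 0, s ^ ((a - 1) / 2) * g s := by
  rw [← integral_comp_rpow_Ioi_of_pos (g := fun s => s ^ ((a - 1) / 2) * g s) two_pos,
    ← integral_const_mul]
  refine setIntegral_congr_fun measurableSet_Ioi fun r (hr : 0 < r) => ?_
  rw [rpow_two, ← rpow_natCast, ← rpow_mul hr.le, smul_eq_mul, Nat.cast_ofNat,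
    show (2 : ℝ) - 1 = 1 by norm_num, rpow_one, mul_div_cancel₀ _ two_ne_zero,
    rpow_sub_one hr.ne']
  field_simp

variable {ι : Type*} [Fintype ι] [Nonempty ι]

/-- Polar coordinates followed by `s = r²`; the constant `π^{n/2} / Γ(n/2)` is half the area of
the unit sphere in `ℝⁿ`. -/
theorem integral_comp_dotProduct_self (g : ℝ → ℝ) :
    ∫ x : ι → ℝ, g (x ⬝ᵥ x) = π ^ ((Fintype.card ι : ℝ) / 2) / Gamma (Fintype.card ι / 2) *
      ∫ s in Ioi 0, s ^ ((Fintype.card ι : ℝ) / 2 - 1) * g s := by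
  set n := Fintype.card ι with hn_def
  have hn : 1 ≤ n := Fintype.card_pos
  have hnorm : ∀ z : EuclideanSpace ℝ ι, z.ofLp ⬝ᵥ z.ofLp = ‖z‖ ^ 2 := fun z => by
    rw [EuclideanSpace.norm_sq_eq]
    simp [dotProduct, sq]
  have hball : (volume : Measure (EuclideanSpace ℝ ι)).real (Metric.ball 0 1) =
      √π ^ n / Gamma (n / 2 + 1) := by
    rw [measureReal_def, EuclideanSpace.volume_ball, ENNReal.ofReal_one, one_pow, one_mul,
      ENNReal.toReal_ofReal (by positivity)]
  have hconst : (n : ℝ) * (√π ^ n / Gamma (n / 2 + 1)) * 2⁻¹ =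
      π ^ ((n : ℝ) / 2) / Gamma (n / 2) := by
    rw [Gamma_add_one (by positivity), sqrt_eq_rpow, ← rpow_natCast, ← rpow_mul pi_pos.le]
    field_simp
  have hpow : ∀ r : ℝ, r ^ (n - 1) * g (r ^ 2) = r ^ ((n : ℝ) - 1) * g (r ^ 2) := fun r => by
    rw [← rpow_natCast, Nat.cast_sub hn, Nat.cast_one]
  calc ∫ x : ι → ℝ, g (x ⬝ᵥ x) = ∫ z : EuclideanSpace ℝ ι, g (‖z‖ ^ 2) := by
        simp_rw [← hnorm]
        exact ((EuclideanSpace.volume_preserving_symm_measurableEquiv_toLp ι).integral_comp'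
          (g := fun x => g (x ⬝ᵥ x))).symm
    _ = n * (√π ^ n / Gamma (n / 2 + 1)) * ∫ r in Ioi 0, r ^ ((n : ℝ) - 1) * g (r ^ 2) := by
        rw [integral_fun_norm_addHaar volume (fun r => g (r ^ 2)), finrank_euclideanSpace,
          hball, nsmul_eq_mul, smul_eq_mul, mul_assoc]
        simp only [smul_eq_mul, ← hn_def, hpow]
    _ = _ := by
        rw [integral_rpow_mul_comp_sq_Ioi, ← mul_assoc, hconst,
          show ((n : ℝ) - 1 - 1) / 2 = n / 2 - 1 by ring]

end Polar

section ChiSquare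

variable {ι : Type*} [Fintype ι] [DecidableEq ι] [Nonempty ι]

theorem map_dotProduct_self_multivariateGaussian_one :
    (_root_.multivariateGaussian (1 : Matrix ι ι ℝ)).map (fun x => x ⬝ᵥ x) =
      gammaMeasure (Fintype.card ι / 2) (1 / 2) := by
  set n := Fintype.card ι
  set h : ℝ → ℝ := fun s => (√((2 * π) ^ n))⁻¹ * exp (-s / 2)
  have hq : Measurable fun x : ι → ℝ => x ⬝ᵥ x := by fun_prop
  have hdensity : ∀ s, 0 < s →
      π ^ ((n : ℝ) / 2) / Gamma (n / 2) * (s ^ ((n : ℝ) / 2 - 1) * h s) =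
        gammaPDFReal (n / 2) (1 / 2) s := fun s hs => by
    have hconst : π ^ ((n : ℝ) / 2) * (√((2 * π) ^ n))⁻¹ = (1 / 2) ^ ((n : ℝ) / 2) := by
      rw [sqrt_eq_rpow, ← rpow_natCast, ← rpow_mul (by positivity), ← div_eq_mul_inv,
        show (n : ℝ) * (1 / 2) = n / 2 by ring, ← div_rpow pi_pos.le (by positivity)]
      congr 1
      field_simp
    rw [gammaPDFReal, if_pos hs.le, ← hconst]
    simp only [h]
    ring_nf
  have := isProbabilityMeasure_gammaMeasure (a := n / 2) (by positivity) one_half_pos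
  refine (Measure.ext_of_Iic _ _ fun t => ?_).symm
  rw [← ofReal_cdf, cdf_gammaMeasure_eq_integral (by positivity) one_half_pos,
    Measure.map_apply hq measurableSet_Iic, _root_.multivariateGaussian,
    withDensity_apply _ (hq measurableSet_Iic), ← ofReal_integral_eq_lintegral_ofReal
      integrable_gaussianPdf_one.integrableOn (ae_of_all _ (gaussianPdf_nonneg 1))]
  congr 1
  calc ∫ s in Iic t, gammaPDFReal (n / 2) (1 / 2) s
      = ∫ s in Ioi 0, (Iic t).indicator (gammaPDFReal (n / 2) (1 / 2)) s := by
        rw [← integral_Ici_eq_integral_Ioi,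
          setIntegral_eq_integral_of_forall_compl_eq_zero (s := Ici 0) fun s hs => ?_,
          integral_indicator measurableSet_Iic]
        simp [gammaPDFReal, show ¬0 ≤ s from hs]
    _ = π ^ ((n : ℝ) / 2) / Gamma (n / 2) *
          ∫ s in Ioi 0, s ^ ((n : ℝ) / 2 - 1) * (Iic t).indicator h s := by
        rw [← integral_const_mul]
        refine setIntegral_congr_fun measurableSet_Ioi fun s (hs : 0 < s) => ?_
        by_cases hst : s ≤ t
        · simp [hst, hdensity s hs]
        · simp [hst]
    _ = ∫ x : ι → ℝ, (Iic t).indicator h (x ⬝ᵥ x) := (integral_comp_dotProduct_self _).symm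
    _ = _ := by
        rw [← integral_indicator (hq measurableSet_Iic)]
        congr 1 with x
        by_cases hx : x ⬝ᵥ x ≤ t <;> simp [hx, h, n, gaussianPdf_one]

theorem map_dotProduct_inv_mulVec_multivariateGaussian {C : Matrix ι ι ℝ} (hC : C.PosDef) :
    (_root_.multivariateGaussian C).map (fun x => x ⬝ᵥ C⁻¹ *ᵥ x) =
      gammaMeasure (Fintype.card ι / 2) (1 / 2) := by
  obtain ⟨A, hA, rfl⟩ := hC.exists_eq_mul_transpose
  rw [multivariateGaussian_mul_transpose hA, Measure.map_map (by fun_prop) (by fun_prop)]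
  simp_rw [Function.comp_def, Matrix.dotProduct_mulVec_inv_mul_transpose hA]
  exact map_dotProduct_self_multivariateGaussian_one

theorem isProbabilityMeasure_multivariateGaussian {C : Matrix ι ι ℝ} (hC : C.PosDef) :
    IsProbabilityMeasure (_root_.multivariateGaussian C) := by
  have := isProbabilityMeasure_gammaMeasure (a := Fintype.card ι / 2) (by positivity)
    one_half_pos
  constructor
  rw [← preimage_univ (f := fun x : ι → ℝ => x ⬝ᵥ C⁻¹ *ᵥ x),
    ← Measure.map_apply (by fun_prop) .univ, map_dotProduct_inv_mulVec_multivariateGaussian hC,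
    measure_univ]

end ChiSquare

theorem bbscore_chiSquare_general {T d : ℕ} (hT : 2 ≤ T) (hd : 1 ≤ d)
    (hCovT : (bridgeCov T).PosDef)
    (Sig : Matrix (Fin d) (Fin d) ℝ) (hSig : Sig.PosDef)
    {Ω : Type*} [MeasurableSpace Ω] (P : Measure Ω)
    (X : Ω → Matrix (Fin d) (Fin (T - 1)) ℝ)
    (hX : P.map (fun ω => _root_.vec (X ω)) = multivariateGaussian (bridgeCov T ⊗ₖ Sig)) :
    P.map (fun ω => Matrix.trace (Sig⁻¹ * X ω * (bridgeCov T)⁻¹ * (X ω)ᵀ)) =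
      gammaMeasure (((T : ℝ) - 1) * (d : ℝ) / 2) (1 / 2) := by
  have : Nonempty (Fin (T - 1) × Fin d) := ⟨(⟨0, by omega⟩, ⟨0, by omega⟩)⟩
  have hC := hCovT.kronecker hSig
  replace hX : P.map (fun ω => Matrix.vec (X ω)) = _ := hX
  have hvec : AEMeasurable (fun ω => Matrix.vec (X ω)) P :=
    .of_map_ne_zero (hX ▸ (isProbabilityMeasure_multivariateGaussian hC).ne_zero)
  have htrace : ∀ Y : Matrix (Fin d) (Fin (T - 1)) ℝ,
      (Sig⁻¹ * Y * (bridgeCov T)⁻¹ * Yᵀ).trace =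
        Matrix.vec Y ⬝ᵥ (bridgeCov T ⊗ₖ Sig)⁻¹ *ᵥ Matrix.vec Y := fun Y => by
    rw [Matrix.trace_mul_mul_mul_transpose, Matrix.inv_kronecker,
      ← Matrix.conjTranspose_eq_transpose_of_trivial, hCovT.isHermitian.inv]
  have hdof : (Fintype.card (Fin (T - 1) × Fin d) : ℝ) / 2 = ((T : ℝ) - 1) * d / 2 := by
    rw [Fintype.card_prod, Fintype.card_fin, Fintype.card_fin, Nat.cast_mul,
      Nat.cast_pred (by omega)]
  calc P.map (fun ω => (Sig⁻¹ * X ω * (bridgeCov T)⁻¹ * (X ω)ᵀ).trace)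
      = (P.map fun ω => Matrix.vec (X ω)).map fun x => x ⬝ᵥ (bridgeCov T ⊗ₖ Sig)⁻¹ *ᵥ x := by
        rw [AEMeasurable.map_map_of_aemeasurable (by fun_prop) hvec]
        simp_rw [Function.comp_def, htrace]
    _ = _ := by rw [hX, map_dotProduct_inv_mulVec_multivariateGaussian hC, hdof]

/-- If the random matrix `X ∈ ℝ^{d×(T−1)}` satisfies
`vec(X) ~ N(0, Σ_T ⊗ Σ)`, then `tr(Σ⁻¹ X Σ_T⁻¹ Xᵀ)` follows the chi-square distribution with
`(T−1)·d` degrees of freedom, i.e. the Gamma distribution with shape `(T−1)·d/2` and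
rate `1/2`. -/
theorem bbscore_chiSquare {T d : ℕ} (hT : 2 ≤ T) (hd : 1 ≤ d)
    (hCovT : (bridgeCov T).PosDef)
    (Sig : Matrix (Fin d) (Fin d) ℝ) (hSig : Sig.PosDef)
    {Ω : Type*} [MeasurableSpace Ω] (P : Measure Ω) [IsProbabilityMeasure P]
    (X : Ω → Matrix (Fin d) (Fin (T - 1)) ℝ)
    (hX : P.map (fun ω => _root_.vec (X ω)) = multivariateGaussian (bridgeCov T ⊗ₖ Sig)) :
    P.map (fun ω => Matrix.trace (Sig⁻¹ * X ω * (bridgeCov T)⁻¹ * (X ω)ᵀ)) =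
      gammaMeasure (((T : ℝ) - 1) * (d : ℝ) / 2) (1 / 2) :=
  bbscore_chiSquare_general hT hd hCovT Sig hSig P X hX
end
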